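/- arXiv:2111.12519 — 4 statements merged into one kernel-verified Lean document; each statement's English description precedes it below -/
import Mathlib

section
/- Let x_e = x − x̄, y_e = y − ȳ, z_e = z − z̄ with A* x̄ + B* ȳ = c. Suppose the update z^{k+1} = z^k + σ(ρ A* x^{k+1} − (1−ρ) B* y^k + B* y^{k+1} − ρ c) holds for some σ > 0, ρ ∈ (0,2). Then ⟨A* x^{k+1}_e + B* y^{k+1}_e, z^{k+1}_e + σ(ρ−1) B* y^{k+1}_e⟩ = (1/(2σρ))[‖z^{k+1}_e + σ(ρ−1) B* y^{k+1}_e‖² − ‖z^k_e + σ(ρ−1) B* y^k_e‖²] + (σρ/2)‖A* x^{k+1}_e + B* y^{k+1}_e‖². -/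
open scoped InnerProductSpace

theorem stmt4 {X Y Z : Type*} [NormedAddCommGroup X] [InnerProductSpace ℝ X]
    [FiniteDimensional ℝ X] [NormedAddCommGroup Y] [InnerProductSpace ℝ Y]
    [FiniteDimensional ℝ Y] [NormedAddCommGroup Z] [InnerProductSpace ℝ Z]
    [FiniteDimensional ℝ Z]
    (Astar : X →ₗ[ℝ] Z) (Bstar : Y →ₗ[ℝ] Z) (c : Z)
    (σ ρ : ℝ) (hσ : 0 < σ) (hρ : ρ ∈ Set.Ioo (0:ℝ) 2)
    (xk1 : X) (yk yk1 : Y) (zk zk1 : Z) (xbar : X) (ybar : Y) (zbar : Z)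
    (hfeas : Astar xbar + Bstar ybar = c)
    (hupd : zk1 = zk + σ • (ρ • Astar xk1 - (1 - ρ) • Bstar yk + Bstar yk1 - ρ • c)) :
    ⟪Astar (xk1 - xbar) + Bstar (yk1 - ybar),
      (zk1 - zbar) + (σ * (ρ - 1)) • Bstar (yk1 - ybar)⟫_ℝ =
      (1 / (2 * σ * ρ)) *
        (‖(zk1 - zbar) + (σ * (ρ - 1)) • Bstar (yk1 - ybar)‖ ^ 2 -
          ‖(zk - zbar) + (σ * (ρ - 1)) • Bstar (yk - ybar)‖ ^ 2) +
      (σ * ρ / 2) * ‖Astar (xk1 - xbar) + Bstar (yk1 - ybar)‖ ^ 2 := by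
  set w := Astar (xk1 - xbar) + Bstar (yk1 - ybar) with hw
  set u1 := (zk1 - zbar) + (σ * (ρ - 1)) • Bstar (yk1 - ybar) with hu1
  set u0 := (zk - zbar) + (σ * (ρ - 1)) • Bstar (yk - ybar) with hu0
  have key : u1 = u0 + (σ * ρ) • w := by
    rw [hu1, hu0, hw, hupd, ← hfeas]
    simp only [map_sub, map_add, smul_sub, smul_add]
    module
  have hσρ : σ * ρ ≠ 0 := by
    have := hρ.1
    positivity
  rw [key]
  rw [← real_inner_self_eq_norm_sq, ← real_inner_self_eq_norm_sq,
    ← real_inner_self_eq_norm_sq]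
  simp only [inner_add_add_self, inner_add_left, inner_add_right, inner_smul_right, inner_smul_left,
    RCLike.conj_to_real, real_inner_comm u0 w]
  have h1 : σ ≠ 0 := hσ.ne'
  have h2 : ρ ≠ 0 := hρ.1.ne'
  field_simp
  ring
end

section
/- Let G be a self-adjoint positive semidefinite linear operator on a finite-dimensional real inner product space and W a self-adjoint positive semidefinite operator with W ⪯ Σ̂ and G = Σ̂ + T − W where (1/2)Σ̂ + T ⪰ 0 for self-adjoint positive semidefinite Σ̂ and self-adjoint T. Then for any u, v: 2⟨u, G(−v)⟩ ≥ −‖u‖²_{Σ̂+T} − ‖v‖²_{Σ̂+T}; more precisely, 2⟨u, (Σ̂+T−W)(−v)⟩ ≥ −‖u‖²_{Σ̂+T} − ‖v‖²_{Σ̂+T}. -/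
open scoped InnerProductSpace

theorem stmt9 {E : Type*} [NormedAddCommGroup E] [InnerProductSpace ℝ E]
    [FiniteDimensional ℝ E] (Sigh T W : E →ₗ[ℝ] E)
    (hSsa : ∀ x y : E, ⟪Sigh x, y⟫_ℝ = ⟪x, Sigh y⟫_ℝ)
    (hTsa : ∀ x y : E, ⟪T x, y⟫_ℝ = ⟪x, T y⟫_ℝ)
    (hWsa : ∀ x y : E, ⟪W x, y⟫_ℝ = ⟪x, W y⟫_ℝ)
    (hSpsd : ∀ x : E, 0 ≤ ⟪x, Sigh x⟫_ℝ)
    (hWpsd : ∀ x : E, 0 ≤ ⟪x, W x⟫_ℝ)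
    (hWle : ∀ x : E, ⟪x, W x⟫_ℝ ≤ ⟪x, Sigh x⟫_ℝ)
    (hhalf : ∀ x : E, 0 ≤ (1/2) * ⟪x, Sigh x⟫_ℝ + ⟪x, T x⟫_ℝ) :
    ∀ u v : E,
      2 * ⟪u, (Sigh + T - W) (-v)⟫_ℝ ≥
        -(⟪u, (Sigh + T) u⟫_ℝ) - ⟪v, (Sigh + T) v⟫_ℝ := by
  intro u v
  have h1 := hhalf (u - v)
  have h2 := hWpsd (u + v)
  have h3 := hWle (u - v)
  have hs : ⟪v, Sigh u⟫_ℝ = ⟪u, Sigh v⟫_ℝ := by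
    rw [← hSsa]; exact real_inner_comm _ _
  have ht : ⟪v, T u⟫_ℝ = ⟪u, T v⟫_ℝ := by
    rw [← hTsa]; exact real_inner_comm _ _
  have hw : ⟪v, W u⟫_ℝ = ⟪u, W v⟫_ℝ := by
    rw [← hWsa]; exact real_inner_comm _ _
  simp only [map_sub, map_add, map_neg, LinearMap.add_apply, LinearMap.sub_apply,
    inner_sub_left, inner_sub_right, inner_add_left, inner_add_right,
    inner_neg_right] at h1 h2 h3 ⊢
  linarith
end

section
/- Suppose q : Y → (−∞, +∞] is closed proper convex, g : Y → ℝ is convex differentiable, and for k ≥ 1 the inclusions −∇g(y^k) − B z^{k+1} − (Σ̂_g + T)(y^{k+1} − y^k) ∈ ∂q(y^{k+1}) and −∇g(y^{k−1}) − B z^k − (Σ̂_g + T)(y^k − y^{k−1}) ∈ ∂q(y^k) hold, where Σ̂_g + T is self-adjoint. Then ⟨y^k − y^{k+1}, B(z^{k+1} − z^k)⟩ ≥ ⟨y^{k+1} − y^k, ∇g(y^k) − ∇g(y^{k−1})⟩ − ⟨y^{k+1} − y^k, (Σ̂_g + T)(y^k − y^{k−1})⟩ + ‖y^{k+1} − y^k‖²_{Σ̂_g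 + T}. -/
open scoped InnerProductSpace

/-- Subdifferential of an extended-real-valued function. -/
def ESubdiff {E : Type*} [NormedAddCommGroup E] [InnerProductSpace ℝ E]
    (q : E → EReal) (u : E) : Set E :=
  {a | ∀ w : E, q u + ((⟪a, w - u⟫_ℝ : ℝ) : EReal) ≤ q w}

/-- Convexity for extended-real-valued functions. -/
def EConvex {E : Type*} [NormedAddCommGroup E] [InnerProductSpace ℝ E]
    (q : E → EReal) : Prop :=
  ∀ x y : E, ∀ t : ℝ, 0 ≤ t → t ≤ 1 →
    q (t • x + (1 - t) • y) ≤ ((t : ℝ) : EReal) * q x + (((1 - t) : ℝ) : EReal) * q y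

/-- If the subdifferential is nonempty and q is proper, then q is finite there. -/
lemma ESubdiff_finite {E : Type*} [NormedAddCommGroup E] [InnerProductSpace ℝ E]
    {q : E → EReal} {u a : E} (ha : a ∈ ESubdiff q u)
    (hbot : ∀ y, q y ≠ ⊥) (htop : ∃ y, q y ≠ ⊤) : q u ≠ ⊤ := by
  obtain ⟨y0, hy0⟩ := htop
  intro h
  have := ha y0
  rw [h] at this
  have : (⊤ : EReal) ≤ q y0 := by
    have hne : ((⟪a, y0 - u⟫_ℝ : ℝ) : EReal) ≠ ⊥ := by exact_mod_cast EReal.coe_ne_bot _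
    calc (⊤ : EReal) = ⊤ + ((⟪a, y0 - u⟫_ℝ : ℝ) : EReal) := by
          rw [EReal.top_add_of_ne_bot hne]
      _ ≤ q y0 := this
  exact hy0 (top_le_iff.mp this)

theorem stmt10 {Y Z : Type*} [NormedAddCommGroup Y] [InnerProductSpace ℝ Y]
    [FiniteDimensional ℝ Y] [NormedAddCommGroup Z] [InnerProductSpace ℝ Z]
    [FiniteDimensional ℝ Z]
    (B : Z →ₗ[ℝ] Y) (q : Y → EReal)
    (hqconv : EConvex q) (hqlsc : LowerSemicontinuous q)
    (hqproper : (∀ y, q y ≠ ⊥) ∧ ∃ y, q y ≠ ⊤)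
    (g : Y → ℝ) (g' : Y → Y) (hgconv : ConvexOn ℝ Set.univ g)
    (hggrad : ∀ y : Y, HasGradientAt g (g' y) y)
    (Sg T : Y →ₗ[ℝ] Y)
    (hsa : ∀ u v : Y, ⟪(Sg + T) u, v⟫_ℝ = ⟪u, (Sg + T) v⟫_ℝ)
    (ykm1 yk yk1 : Y) (zk zk1 : Z)
    (h1 : -(g' yk) - B zk1 - (Sg + T) (yk1 - yk) ∈ ESubdiff q yk1)
    (h2 : -(g' ykm1) - B zk - (Sg + T) (yk - ykm1) ∈ ESubdiff q yk) :
    ⟪yk - yk1, B (zk1 - zk)⟫_ℝ ≥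
      ⟪yk1 - yk, g' yk - g' ykm1⟫_ℝ - ⟪yk1 - yk, (Sg + T) (yk - ykm1)⟫_ℝ +
        ⟪yk1 - yk, (Sg + T) (yk1 - yk)⟫_ℝ := by
  obtain ⟨hbot, htop⟩ := hqproper
  set a := -(g' yk) - B zk1 - (Sg + T) (yk1 - yk) with ha
  set b := -(g' ykm1) - B zk - (Sg + T) (yk - ykm1) with hb
  have hfin1 : q yk1 ≠ ⊤ := ESubdiff_finite h1 hbot htop
  have hfin2 : q yk ≠ ⊤ := ESubdiff_finite h2 hbot htop
  set r1 : ℝ := (q yk1).toReal with hr1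
  set r2 : ℝ := (q yk).toReal with hr2
  have hq1 : q yk1 = (r1 : EReal) := (EReal.coe_toReal hfin1 (hbot yk1)).symm
  have hq2 : q yk = (r2 : EReal) := (EReal.coe_toReal hfin2 (hbot yk)).symm
  have i1 : r1 + ⟪a, yk - yk1⟫_ℝ ≤ r2 := by
    have := h1 yk
    rw [hq1, hq2] at this
    exact_mod_cast this
  have i2 : r2 + ⟪b, yk1 - yk⟫_ℝ ≤ r1 := by
    have := h2 yk1
    rw [hq1, hq2] at this
    exact_mod_cast this
  have key : ⟪a - b, yk1 - yk⟫_ℝ ≥ 0 := by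
    have ha' : ⟪a, yk - yk1⟫_ℝ = -⟪a, yk1 - yk⟫_ℝ := by
      rw [← inner_neg_right]; congr 1; abel
    rw [inner_sub_left]; linarith [i1, i2, ha'.symm]
  rw [ha, hb] at key
  simp only [inner_sub_left, inner_sub_right, inner_neg_left, inner_neg_right, map_sub]
    at key ⊢
  have comm : ∀ u v : Y, ⟪u, v⟫_ℝ = ⟪v, u⟫_ℝ := fun u v => real_inner_comm v u
  linarith [comm (g' yk) yk1, comm (g' yk) yk, comm (g' ykm1) yk1, comm (g' ykm1) yk,
    comm (B zk1) yk1, comm (B zk1) yk, comm (B zk) yk1, comm (B zk) yk,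
    comm ((Sg + T) yk1) yk1, comm ((Sg + T) yk1) yk, comm ((Sg + T) yk) yk1,
    comm ((Sg + T) yk) yk, comm ((Sg + T) ykm1) yk1, comm ((Sg + T) ykm1) yk]
end

section
/- With the notation of Lemma 3.3: under the stated KKT inclusions at (x̄, ȳ, z̄), majorization/minorization bounds on f and g with operators Σ_f ⪯ Σ̂_f and Σ_g ⪯ Σ̂_g, and the generalized ADMM updates (x-step optimality: 0 ∈ ∂p(x^{k+1}) + ∇f(x^k) + A[z^k + σ(A*x^{k+1} + B*y^k − c)] + (Σ̂_f + S)(x^{k+1} − x^k); analogous y-step; z^{k+1} = z^k + σ(ρ A*x^{k+1} − (1−ρ)B*y^k + B*y^{k+1} − ρc)), the potential φ_k(x̄,ȳ,z̄) := (σρ)^{-1}‖z^k_e + σ(ρ−1)B*y^k_e‖² + ‖x^k_e‖²_{Σ̂_f+S} + ‖y^k_e‖²_{Σ̂_g+T+σ(2−ρ)BB*} satisfies φ_k(x̄,ȳ,z̄) − φ_{k+1}(x̄,ȳ,z̄) ≥ ‖x^{k+1}−x^k‖²_{(1/2)Σ_f+S} + ‖y^{k+1}−y^k‖²_{(1/2)Σ_g+T}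 + σ(2−ρ)‖A*x^{k+1}_e + B*y^k_e‖². -/
open scoped InnerProductSpace

lemma esubdiff_mono {E : Type*} [NormedAddCommGroup E] [InnerProductSpace ℝ E]
    (p : E → EReal) (hbot : ∀ x, p x ≠ ⊥) (w : E) (hw : p w ≠ ⊤)
    {u v x y : E} (hu : u ∈ ESubdiff p x) (hv : v ∈ ESubdiff p y) :
    0 ≤ ⟪u - v, x - y⟫_ℝ := by
  have hx : p x ≠ ⊤ := by
    intro h
    have h1 := hu w
    rw [h, EReal.top_add_of_ne_bot (EReal.coe_ne_bot _)] at h1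
    exact hw (top_le_iff.mp h1)
  have hy : p y ≠ ⊤ := by
    intro h
    have h1 := hv w
    rw [h, EReal.top_add_of_ne_bot (EReal.coe_ne_bot _)] at h1
    exact hw (top_le_iff.mp h1)
  have h1 := hu y
  have h2 := hv x
  rw [← EReal.coe_toReal hx (hbot x), ← EReal.coe_toReal hy (hbot y)] at h1 h2
  rw [← EReal.coe_add, EReal.coe_le_coe_iff] at h1 h2
  have e : ⟪u - v, x - y⟫_ℝ = -⟪u, y - x⟫_ℝ - ⟪v, x - y⟫_ℝ := by
    simp [inner_sub_left, inner_sub_right]; ring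
  rw [e]; linarith

lemma quad_split {E : Type*} [NormedAddCommGroup E] [InnerProductSpace ℝ E]
    (M : E →ₗ[ℝ] E) (hM : ∀ u v : E, ⟪M u, v⟫_ℝ = ⟪u, M v⟫_ℝ) (u v : E) :
    ⟪M (u - v), u⟫_ℝ = (⟪u, M u⟫_ℝ - ⟪v, M v⟫_ℝ + ⟪u - v, M (u - v)⟫_ℝ) / 2 := by
  simp only [map_sub, inner_sub_left, inner_sub_right]
  linarith [hM u u, hM v u, real_inner_comm (M v) u, real_inner_comm (M u) u]

lemma quad_slack {E : Type*} [NormedAddCommGroup E] [InnerProductSpace ℝ E]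
    (M : E →ₗ[ℝ] E) (hpsd : ∀ u : E, 0 ≤ ⟪u, M u⟫_ℝ) (u v : E) :
    ⟪u - v, M (u - v)⟫_ℝ / 2 ≤ ⟪u, M u⟫_ℝ + ⟪v, M v⟫_ℝ := by
  have h := hpsd (u + v)
  simp only [map_add, map_sub, inner_add_left, inner_add_right, inner_sub_left,
    inner_sub_right] at h ⊢
  linarith


theorem stmt13 {X Y Z : Type*} [NormedAddCommGroup X] [InnerProductSpace ℝ X]
    [FiniteDimensional ℝ X] [NormedAddCommGroup Y] [InnerProductSpace ℝ Y]
    [FiniteDimensional ℝ Y] [NormedAddCommGroup Z] [InnerProductSpace ℝ Z]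
    [FiniteDimensional ℝ Z]
    -- nonsmooth parts: closed proper convex
    (p : X → EReal) (q : Y → EReal)
    (hpconv : EConvex p) (hplsc : LowerSemicontinuous p)
    (hpproper : (∀ x, p x ≠ ⊥) ∧ ∃ x, p x ≠ ⊤)
    (hqconv : EConvex q) (hqlsc : LowerSemicontinuous q)
    (hqproper : (∀ y, q y ≠ ⊥) ∧ ∃ y, q y ≠ ⊤)
    -- smooth parts with gradients
    (f : X → ℝ) (f' : X → X) (hfconv : ConvexOn ℝ Set.univ f)
    (hfgrad : ∀ x : X, HasGradientAt f (f' x) x)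
    (g : Y → ℝ) (g' : Y → Y) (hgconv : ConvexOn ℝ Set.univ g)
    (hggrad : ∀ y : Y, HasGradientAt g (g' y) y)
    -- linear maps and adjoints
    (A : Z →ₗ[ℝ] X) (B : Z →ₗ[ℝ] Y) (Astar : X →ₗ[ℝ] Z) (Bstar : Y →ₗ[ℝ] Z)
    (hA : ∀ (z : Z) (x : X), ⟪A z, x⟫_ℝ = ⟪z, Astar x⟫_ℝ)
    (hB : ∀ (z : Z) (y : Y), ⟪B z, y⟫_ℝ = ⟪z, Bstar y⟫_ℝ)
    (c : Z)
    -- self-adjoint psd operators for the quadratic bounds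
    (Sf Shf : X →ₗ[ℝ] X) (Sg Shg : Y →ₗ[ℝ] Y) (S : X →ₗ[ℝ] X) (T : Y →ₗ[ℝ] Y)
    (hSfsa : ∀ u v : X, ⟪Sf u, v⟫_ℝ = ⟪u, Sf v⟫_ℝ) (hSfpsd : ∀ u : X, 0 ≤ ⟪u, Sf u⟫_ℝ)
    (hShfsa : ∀ u v : X, ⟪Shf u, v⟫_ℝ = ⟪u, Shf v⟫_ℝ) (hShfpsd : ∀ u : X, 0 ≤ ⟪u, Shf u⟫_ℝ)
    (hSgsa : ∀ u v : Y, ⟪Sg u, v⟫_ℝ = ⟪u, Sg v⟫_ℝ) (hSgpsd : ∀ u : Y, 0 ≤ ⟪u, Sg u⟫_ℝ)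
    (hShgsa : ∀ u v : Y, ⟪Shg u, v⟫_ℝ = ⟪u, Shg v⟫_ℝ) (hShgpsd : ∀ u : Y, 0 ≤ ⟪u, Shg u⟫_ℝ)
    (hSsa : ∀ u v : X, ⟪S u, v⟫_ℝ = ⟪u, S v⟫_ℝ) (hSpsd : ∀ u : X, 0 ≤ ⟪u, S u⟫_ℝ)
    (hTsa : ∀ u v : Y, ⟪T u, v⟫_ℝ = ⟪u, T v⟫_ℝ) (hTpsd : ∀ u : Y, 0 ≤ ⟪u, T u⟫_ℝ)
    (hfle : ∀ u : X, ⟪u, Sf u⟫_ℝ ≤ ⟪u, Shf u⟫_ℝ)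
    (hgle : ∀ u : Y, ⟪u, Sg u⟫_ℝ ≤ ⟪u, Shg u⟫_ℝ)
    -- minorization/majorization bounds
    (hflower : ∀ x x' : X,
      f x ≥ f x' + ⟪x - x', f' x'⟫_ℝ + (1/2) * ⟪x - x', Sf (x - x')⟫_ℝ)
    (hfupper : ∀ x x' : X,
      f x ≤ f x' + ⟪x - x', f' x'⟫_ℝ + (1/2) * ⟪x - x', Shf (x - x')⟫_ℝ)
    (hglower : ∀ y y' : Y,
      g y ≥ g y' + ⟪y - y', g' y'⟫_ℝ + (1/2) * ⟪y - y', Sg (y - y')⟫_ℝ)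
    (hgupper : ∀ y y' : Y,
      g y ≤ g y' + ⟪y - y', g' y'⟫_ℝ + (1/2) * ⟪y - y', Shg (y - y')⟫_ℝ)
    -- parameters
    (σ ρ : ℝ) (hσ : 0 < σ) (hρ : ρ ∈ Set.Ioo (0:ℝ) 2)
    -- KKT point
    (xbar : X) (ybar : Y) (zbar : Z)
    (hkkt1 : -(f' xbar + A zbar) ∈ ESubdiff p xbar)
    (hkkt2 : -(g' ybar + B zbar) ∈ ESubdiff q ybar)
    (hfeas : Astar xbar + Bstar ybar = c)
    -- one step of the majorized generalized ADMM
    (xk xk1 : X) (yk yk1 : Y) (zk zk1 : Z)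
    (hxstep : -(f' xk + A (zk + σ • (Astar xk1 + Bstar yk - c)) + (Shf + S) (xk1 - xk))
        ∈ ESubdiff p xk1)
    (hystep : -(g' yk +
          B (zk + (σ * ρ) • (Astar xk1 + Bstar yk1 - c) + (σ * (1 - ρ)) • Bstar (yk1 - yk)) +
          (Shg + T) (yk1 - yk))
        ∈ ESubdiff q yk1)
    (hzstep : zk1 = zk + σ • (ρ • Astar xk1 - (1 - ρ) • Bstar yk + Bstar yk1 - ρ • c)) :
    ((σ * ρ)⁻¹ * ‖(zk - zbar) + (σ * (ρ - 1)) • Bstar (yk - ybar)‖ ^ 2 +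
        ⟪xk - xbar, (Shf + S) (xk - xbar)⟫_ℝ +
        (⟪yk - ybar, (Shg + T) (yk - ybar)⟫_ℝ + σ * (2 - ρ) * ‖Bstar (yk - ybar)‖ ^ 2)) -
      ((σ * ρ)⁻¹ * ‖(zk1 - zbar) + (σ * (ρ - 1)) • Bstar (yk1 - ybar)‖ ^ 2 +
        ⟪xk1 - xbar, (Shf + S) (xk1 - xbar)⟫_ℝ +
        (⟪yk1 - ybar, (Shg + T) (yk1 - ybar)⟫_ℝ + σ * (2 - ρ) * ‖Bstar (yk1 - ybar)‖ ^ 2)) ≥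
      ⟪xk1 - xk, ((1/2 : ℝ) • Sf + S) (xk1 - xk)⟫_ℝ +
        ⟪yk1 - yk, ((1/2 : ℝ) • Sg + T) (yk1 - yk)⟫_ℝ +
        σ * (2 - ρ) * ‖Astar (xk1 - xbar) + Bstar (yk - ybar)‖ ^ 2 := by
  obtain ⟨hpbot, wp, hwp⟩ := hpproper
  obtain ⟨hqbot, wq, hwq⟩ := hqproper
  obtain ⟨hρ0, hρ2⟩ := hρ
  have hUsa : ∀ u v : X, ⟪(Shf + S) u, v⟫_ℝ = ⟪u, (Shf + S) v⟫_ℝ := by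
    intro u v
    simp only [LinearMap.add_apply, inner_add_left, inner_add_right, hShfsa, hSsa]
  have hVsa : ∀ u v : Y, ⟪(Shg + T) u, v⟫_ℝ = ⟪u, (Shg + T) v⟫_ℝ := by
    intro u v
    simp only [LinearMap.add_apply, inner_add_left, inner_add_right, hShgsa, hTsa]
  -- x-step monotonicity
  have hmx := esubdiff_mono p hpbot wp hwp hxstep hkkt1
  have hv1 : (-(f' xk + A (zk + σ • (Astar xk1 + Bstar yk - c)) + (Shf + S) (xk1 - xk))) -
      (-(f' xbar + A zbar)) =
      -((f' xk - f' xbar) +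
        A ((zk - zbar) + σ • (Astar (xk1 - xbar) + Bstar (yk - ybar))) +
        (Shf + S) (xk1 - xk)) := by
    rw [← hfeas]
    simp only [map_add, map_sub, map_smul]
    module
  rw [hv1] at hmx
  simp only [inner_neg_left, inner_add_left, inner_sub_left, hA, real_inner_smul_left] at hmx
  -- y-step monotonicity
  have hmy := esubdiff_mono q hqbot wq hwq hystep hkkt2
  have hv2 : (-(g' yk + B (zk + (σ * ρ) • (Astar xk1 + Bstar yk1 - c) +
        (σ * (1 - ρ)) • Bstar (yk1 - yk)) + (Shg + T) (yk1 - yk))) -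
      (-(g' ybar + B zbar)) =
      -((g' yk - g' ybar) +
        B ((zk - zbar) + (σ * ρ) • (Astar (xk1 - xbar) + Bstar (yk1 - ybar)) +
          (σ * (1 - ρ)) • (Bstar (yk1 - ybar) - Bstar (yk - ybar))) +
        (Shg + T) (yk1 - yk)) := by
    rw [← hfeas]
    simp only [map_add, map_sub, map_smul]
    module
  rw [hv2] at hmy
  simp only [inner_neg_left, inner_add_left, inner_sub_left, hB, real_inner_smul_left] at hmy
  -- quadratic splits
  have hqx : ⟪(Shf + S) (xk1 - xk), xk1 - xbar⟫_ℝ =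
      (⟪xk1 - xbar, (Shf + S) (xk1 - xbar)⟫_ℝ - ⟪xk - xbar, (Shf + S) (xk - xbar)⟫_ℝ +
        ⟪xk1 - xk, (Shf + S) (xk1 - xk)⟫_ℝ) / 2 := by
    have h := quad_split (Shf + S) hUsa (xk1 - xbar) (xk - xbar)
    have e : (xk1 - xbar) - (xk - xbar) = xk1 - xk := by abel
    rw [e] at h
    exact h
  have hqy : ⟪(Shg + T) (yk1 - yk), yk1 - ybar⟫_ℝ =
      (⟪yk1 - ybar, (Shg + T) (yk1 - ybar)⟫_ℝ - ⟪yk - ybar, (Shg + T) (yk - ybar)⟫_ℝ +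
        ⟪yk1 - yk, (Shg + T) (yk1 - yk)⟫_ℝ) / 2 := by
    have h := quad_split (Shg + T) hVsa (yk1 - ybar) (yk - ybar)
    have e : (yk1 - ybar) - (yk - ybar) = yk1 - yk := by abel
    rw [e] at h
    exact h
  have hdx : ⟪xk1 - xk, (Shf + S) (xk1 - xk)⟫_ℝ =
      ⟪xk1 - xk, Shf (xk1 - xk)⟫_ℝ + ⟪xk1 - xk, S (xk1 - xk)⟫_ℝ := by
    simp [LinearMap.add_apply, inner_add_right]
  have hdy : ⟪yk1 - yk, (Shg + T) (yk1 - yk)⟫_ℝ =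
      ⟪yk1 - yk, Shg (yk1 - yk)⟫_ℝ + ⟪yk1 - yk, T (yk1 - yk)⟫_ℝ := by
    simp [LinearMap.add_apply, inner_add_right]
  have hslackx : ⟪xk1 - xk, Sf (xk1 - xk)⟫_ℝ / 2 ≤
      ⟪xk1 - xbar, Sf (xk1 - xbar)⟫_ℝ + ⟪xk - xbar, Sf (xk - xbar)⟫_ℝ := by
    have h := quad_slack Sf hSfpsd (xk1 - xbar) (xk - xbar)
    have e : (xk1 - xbar) - (xk - xbar) = xk1 - xk := by abel
    rw [e] at h
    exact h
  have hslacky : ⟪yk1 - yk, Sg (yk1 - yk)⟫_ℝ / 2 ≤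
      ⟪yk1 - ybar, Sg (yk1 - ybar)⟫_ℝ + ⟪yk - ybar, Sg (yk - ybar)⟫_ℝ := by
    have h := quad_slack Sg hSgpsd (yk1 - ybar) (yk - ybar)
    have e : (yk1 - ybar) - (yk - ybar) = yk1 - yk := by abel
    rw [e] at h
    exact h
  -- gradient bounds
  have hgx : (⟪xk - xbar, Sf (xk - xbar)⟫_ℝ + ⟪xk1 - xbar, Sf (xk1 - xbar)⟫_ℝ -
      ⟪xk1 - xk, Shf (xk1 - xk)⟫_ℝ) / 2 ≤
      ⟪f' xk, xk1 - xbar⟫_ℝ - ⟪f' xbar, xk1 - xbar⟫_ℝ := by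
    have l1 := hflower xbar xk
    have l2 := hflower xk1 xbar
    have l3 := hfupper xk1 xk
    have e1 : ⟪xk1 - xk, f' xk⟫_ℝ = ⟪f' xk, xk1 - xbar⟫_ℝ + ⟪xbar - xk, f' xk⟫_ℝ := by
      rw [show ⟪f' xk, xk1 - xbar⟫_ℝ = ⟪xk1 - xbar, f' xk⟫_ℝ from real_inner_comm _ _,
        ← inner_add_left]
      congr 1
      abel
    have e2 : ⟪xbar - xk, Sf (xbar - xk)⟫_ℝ = ⟪xk - xbar, Sf (xk - xbar)⟫_ℝ := by
      have e : xbar - xk = -(xk - xbar) := by abel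
      rw [e, map_neg, inner_neg_neg]
    have e3 : ⟪xk1 - xbar, f' xbar⟫_ℝ = ⟪f' xbar, xk1 - xbar⟫_ℝ := real_inner_comm _ _
    linarith
  have hgy : (⟪yk - ybar, Sg (yk - ybar)⟫_ℝ + ⟪yk1 - ybar, Sg (yk1 - ybar)⟫_ℝ -
      ⟪yk1 - yk, Shg (yk1 - yk)⟫_ℝ) / 2 ≤
      ⟪g' yk, yk1 - ybar⟫_ℝ - ⟪g' ybar, yk1 - ybar⟫_ℝ := by
    have l1 := hglower ybar yk
    have l2 := hglower yk1 ybar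
    have l3 := hgupper yk1 yk
    have e1 : ⟪yk1 - yk, g' yk⟫_ℝ = ⟪g' yk, yk1 - ybar⟫_ℝ + ⟪ybar - yk, g' yk⟫_ℝ := by
      rw [show ⟪g' yk, yk1 - ybar⟫_ℝ = ⟪yk1 - ybar, g' yk⟫_ℝ from real_inner_comm _ _,
        ← inner_add_left]
      congr 1
      abel
    have e2 : ⟪ybar - yk, Sg (ybar - yk)⟫_ℝ = ⟪yk - ybar, Sg (yk - ybar)⟫_ℝ := by
      have e : ybar - yk = -(yk - ybar) := by abel
      rw [e, map_neg, inner_neg_neg]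
    have e3 : ⟪yk1 - ybar, g' ybar⟫_ℝ = ⟪g' ybar, yk1 - ybar⟫_ℝ := real_inner_comm _ _
    linarith
  -- z-part identity
  have hw1 : (zk1 - zbar) + (σ * (ρ - 1)) • Bstar (yk1 - ybar) =
      ((zk - zbar) + (σ * (ρ - 1)) • Bstar (yk - ybar)) +
        (σ * ρ) • (Astar (xk1 - xbar) + Bstar (yk1 - ybar)) := by
    rw [hzstep, ← hfeas]
    simp only [map_add, map_sub, map_smul]
    module
  have hnzρ : σ * ρ ≠ 0 := ne_of_gt (mul_pos hσ hρ0)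
  have hzid : (σ * ρ)⁻¹ * ‖(zk1 - zbar) + (σ * (ρ - 1)) • Bstar (yk1 - ybar)‖ ^ 2 =
      (σ * ρ)⁻¹ * ‖(zk - zbar) + (σ * (ρ - 1)) • Bstar (yk - ybar)‖ ^ 2 +
      2 * (⟪zk - zbar, Astar (xk1 - xbar)⟫_ℝ + ⟪zk - zbar, Bstar (yk1 - ybar)⟫_ℝ +
        σ * (ρ - 1) * (⟪Bstar (yk - ybar), Astar (xk1 - xbar)⟫_ℝ +
          ⟪Bstar (yk - ybar), Bstar (yk1 - ybar)⟫_ℝ)) +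
      σ * ρ * (⟪Astar (xk1 - xbar), Astar (xk1 - xbar)⟫_ℝ +
        2 * ⟪Astar (xk1 - xbar), Bstar (yk1 - ybar)⟫_ℝ +
        ⟪Bstar (yk1 - ybar), Bstar (yk1 - ybar)⟫_ℝ) := by
    rw [hw1, norm_add_sq_real]
    have hC : ⟪(zk - zbar) + (σ * (ρ - 1)) • Bstar (yk - ybar),
        (σ * ρ) • (Astar (xk1 - xbar) + Bstar (yk1 - ybar))⟫_ℝ =
        (σ * ρ) * (⟪zk - zbar, Astar (xk1 - xbar)⟫_ℝ + ⟪zk - zbar, Bstar (yk1 - ybar)⟫_ℝ +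
          σ * (ρ - 1) * (⟪Bstar (yk - ybar), Astar (xk1 - xbar)⟫_ℝ +
            ⟪Bstar (yk - ybar), Bstar (yk1 - ybar)⟫_ℝ)) := by
      simp only [inner_add_left, inner_add_right, real_inner_smul_left, real_inner_smul_right]
      ring
    have hD : ‖(σ * ρ) • (Astar (xk1 - xbar) + Bstar (yk1 - ybar))‖ ^ 2 =
        (σ * ρ) ^ 2 * (⟪Astar (xk1 - xbar), Astar (xk1 - xbar)⟫_ℝ +
          2 * ⟪Astar (xk1 - xbar), Bstar (yk1 - ybar)⟫_ℝ +
          ⟪Bstar (yk1 - ybar), Bstar (yk1 - ybar)⟫_ℝ) := by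
      rw [norm_smul, mul_pow, norm_add_sq_real, ← real_inner_self_eq_norm_sq,
        ← real_inner_self_eq_norm_sq]
      simp only [real_inner_self_eq_norm_sq, Real.norm_eq_abs]
      rw [sq_abs]
    rw [hC, hD]
    field_simp
  -- rewrite goal norms into inner products
  have hn1 : ‖Bstar (yk - ybar)‖ ^ 2 = ⟪Bstar (yk - ybar), Bstar (yk - ybar)⟫_ℝ :=
    (real_inner_self_eq_norm_sq _).symm
  have hn2 : ‖Bstar (yk1 - ybar)‖ ^ 2 = ⟪Bstar (yk1 - ybar), Bstar (yk1 - ybar)⟫_ℝ :=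
    (real_inner_self_eq_norm_sq _).symm
  have hn3 : ‖Astar (xk1 - xbar) + Bstar (yk - ybar)‖ ^ 2 =
      ⟪Astar (xk1 - xbar), Astar (xk1 - xbar)⟫_ℝ +
      2 * ⟪Bstar (yk - ybar), Astar (xk1 - xbar)⟫_ℝ +
      ⟪Bstar (yk - ybar), Bstar (yk - ybar)⟫_ℝ := by
    rw [norm_add_sq_real, ← real_inner_self_eq_norm_sq, ← real_inner_self_eq_norm_sq,
      real_inner_comm (Astar (xk1 - xbar)) (Bstar (yk - ybar))]
  have h6x : ⟪xk1 - xk, ((1/2 : ℝ) • Sf + S) (xk1 - xk)⟫_ℝ =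
      (1/2) * ⟪xk1 - xk, Sf (xk1 - xk)⟫_ℝ + ⟪xk1 - xk, S (xk1 - xk)⟫_ℝ := by
    simp [LinearMap.add_apply, LinearMap.smul_apply, inner_add_right, real_inner_smul_right]
  have h6y : ⟪yk1 - yk, ((1/2 : ℝ) • Sg + T) (yk1 - yk)⟫_ℝ =
      (1/2) * ⟪yk1 - yk, Sg (yk1 - yk)⟫_ℝ + ⟪yk1 - yk, T (yk1 - yk)⟫_ℝ := by
    simp [LinearMap.add_apply, LinearMap.smul_apply, inner_add_right, real_inner_smul_right]
  rw [ge_iff_le, hn1, hn2, hn3, h6x, h6y]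
  have hez1 : ⟪zk - zbar, Astar (xk1 - xbar)⟫_ℝ =
      ⟪zk, Astar (xk1 - xbar)⟫_ℝ - ⟪zbar, Astar (xk1 - xbar)⟫_ℝ := inner_sub_left _ _ _
  have hez2 : ⟪zk - zbar, Bstar (yk1 - ybar)⟫_ℝ =
      ⟪zk, Bstar (yk1 - ybar)⟫_ℝ - ⟪zbar, Bstar (yk1 - ybar)⟫_ℝ := inner_sub_left _ _ _
  linarith [hmx, hmy, hqx, hqy, hdx, hdy, hgx, hgy, hslackx, hslacky, hzid, hez1, hez2]
end
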